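/- Let (y_k), (s_k), (c_k) be real sequences with y_k ≥ 0 for all k, 0 ≤ s_k ≤ s̄ for all k with s̄ < 1, and 0 < x̲ ≤ c_k/(1 − s_k) ≤ X < ∞ for all k (for some constants x̲, X). If y_{k+1} ≤ s_k·y_k + c_k for all k, then limsup_{k→∞} y_k ≤ limsup_{k→∞} c_k/(1 − s_k). -/

import Mathlib

/-!
Fix `M` above `limsup c_k / (1 - s_k)`. Eventually `c_k ≤ (1 - s_k) M`, so the recursion
becomes `y_{k+1} - M ≤ s_k (y_k - M)`: the excess `(y_k - M)⁺` contracts by the factor `s̄ < 1`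
and tends to `0`, whence `limsup y_k ≤ M`. Let `M` decrease to the limsup.
-/

open Filter Topology

theorem tendsto_max_sub_zero_of_le_mul_add {y s : ℕ → ℝ} {r M : ℝ} (hr : r < 1)
    (hs : ∀ k, 0 ≤ s k ∧ s k ≤ r)
    (hrec : ∀ᶠ k in atTop, y (k + 1) ≤ s k * y k + (1 - s k) * M) :
    Tendsto (fun k => max (y k - M) 0) atTop (𝓝 0) := by
  set z := fun k => max (y k - M) 0
  have hz : ∀ k, 0 ≤ z k := fun k => le_max_right _ _
  have hcontr : ∀ᶠ k in atTop, ‖z (k + 1)‖ ≤ r * ‖z k‖ := by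
    filter_upwards [hrec] with k hk
    have hexcess : y (k + 1) - M ≤ s k * z k := by
      linarith [mul_le_mul_of_nonneg_left (le_max_left (y k - M) 0) (hs k).1]
    rw [Real.norm_of_nonneg (hz _), Real.norm_of_nonneg (hz _)]
    exact max_le (hexcess.trans (mul_le_mul_of_nonneg_right (hs k).2 (hz k)))
      (mul_nonneg ((hs 0).1.trans (hs 0).2) (hz k))
  exact (summable_of_ratio_norm_eventually_le hr hcontr).tendsto_atTop_zero

theorem limsup_le_of_le_mul_add {y s : ℕ → ℝ} {r M : ℝ} (hr : r < 1)
    (hs : ∀ k, 0 ≤ s k ∧ s k ≤ r) (hy : IsCoboundedUnder (· ≤ ·) atTop y)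
    (hrec : ∀ᶠ k in atTop, y (k + 1) ≤ s k * y k + (1 - s k) * M) :
    limsup y atTop ≤ M := by
  refine le_of_forall_pos_le_add fun ε hε => limsup_le_of_le hy ?_
  filter_upwards [(tendsto_max_sub_zero_of_le_mul_add hr hs hrec).eventually
    (eventually_le_nhds hε)] with k hk
  linarith [le_max_left (y k - M) 0]

theorem stmt_19_general (y s c : ℕ → ℝ) (hy : ∀ k, 0 ≤ y k)
    (sbar : ℝ) (hsbar : sbar < 1) (hs : ∀ k, 0 ≤ s k ∧ s k ≤ sbar)
    (xlo X : ℝ)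
    (hratio : ∀ k, xlo ≤ c k / (1 - s k) ∧ c k / (1 - s k) ≤ X)
    (hrec : ∀ k, y (k + 1) ≤ s k * y k + c k) :
    Filter.limsup y Filter.atTop ≤
      Filter.limsup (fun k => c k / (1 - s k)) Filter.atTop := by
  have hy_cobdd : IsCoboundedUnder (· ≤ ·) atTop y :=
    (isBoundedUnder_of ⟨0, hy⟩ : IsBoundedUnder (· ≥ ·) atTop y).isCoboundedUnder_le
  have hratio_bdd : IsBoundedUnder (· ≤ ·) atTop fun k => c k / (1 - s k) :=
    isBoundedUnder_of ⟨X, fun k => (hratio k).2⟩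
  refine le_of_forall_gt_imp_ge_of_dense fun M hM => limsup_le_of_le_mul_add hsbar hs hy_cobdd ?_
  filter_upwards [eventually_lt_of_limsup_lt hM hratio_bdd] with k hk
  have hc : c k ≤ (1 - s k) * M :=
    ((div_lt_iff₀' (by linarith [(hs k).2])).mp hk).le
  linarith [hrec k]

/-- Scalar recursion limsup bound: if `y (k+1) ≤ s k * y k + c k` with `y k ≥ 0`,
`0 ≤ s k ≤ s̄ < 1`, and `0 < x̲ ≤ c k / (1 - s k) ≤ X < ∞` for all `k`, then
`limsup_k y k ≤ limsup_k c k / (1 - s k)`. -/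
theorem stmt_19 (y s c : ℕ → ℝ) (hy : ∀ k, 0 ≤ y k)
    (sbar : ℝ) (hsbar : sbar < 1) (hs : ∀ k, 0 ≤ s k ∧ s k ≤ sbar)
    (xlo X : ℝ) (hxlo : 0 < xlo)
    (hratio : ∀ k, xlo ≤ c k / (1 - s k) ∧ c k / (1 - s k) ≤ X)
    (hrec : ∀ k, y (k + 1) ≤ s k * y k + c k) :
    Filter.limsup y Filter.atTop ≤
      Filter.limsup (fun k => c k / (1 - s k)) Filter.atTop :=
  stmt_19_general y s c hy sbar hsbar hs xlo X hratio hrec
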